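/- Let Ω ⊆ ℝ² be open, v ∈ C^∞(Ω), p ∈ (1,∞), and let x ∈ Ω be a point with Dv(x) ≠ 0 at which |Dv(x)|² Δv(x) + (p − 2) Δ∞v(x) = 0 (the p-Laplace equation in nondivergence form). Let W(y) = |Dv(y)|^{−1} Dv(y), which is C¹ on a neighborhood of x. Then |DW(x)|² = |D²v(x) Dv(x)|² / |Dv(x)|⁴ + p(p − 2) (Δ∞v(x))² / |Dv(x)|⁶, where the first term on the right equals |D(log|Dv|)(x)|². -/

import Mathlib

open Real MeasureTheory
open scoped RealInnerProductSpace

noncomputable section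

/-- The Euclidean plane ℝ². -/
abbrev E2 : Type := EuclideanSpace ℝ (Fin 2)

/-- Standard basis vector. -/
def ee (i : Fin 2) : E2 := EuclideanSpace.single i (1 : ℝ)

/-- Partial derivative ∂ᵢf. -/
def pd (i : Fin 2) (f : E2 → ℝ) (x : E2) : ℝ := fderiv ℝ f x (ee i)

/-- Second partial derivative ∂ᵢ∂ⱼf. -/
def pd2 (i j : Fin 2) (f : E2 → ℝ) (x : E2) : ℝ := pd i (pd j f) x

/-- |Df|², squared Euclidean norm of the gradient. -/
def gradSq (f : E2 → ℝ) (x : E2) : ℝ := (pd 0 f x) ^ 2 + (pd 1 f x) ^ 2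

/-- |Df|, Euclidean norm of the gradient. -/
def gradNorm (f : E2 → ℝ) (x : E2) : ℝ := Real.sqrt (gradSq f x)

/-- Laplacian Δf = tr D²f. -/
def lap (f : E2 → ℝ) (x : E2) : ℝ := pd2 0 0 f x + pd2 1 1 f x

/-- ∞-Laplacian Δ∞f = D²f Df · Df. -/
def infLap (f : E2 → ℝ) (x : E2) : ℝ :=
  pd2 0 0 f x * pd 0 f x * pd 0 f x + pd2 0 1 f x * pd 0 f x * pd 1 f x +
  pd2 1 0 f x * pd 1 f x * pd 0 f x + pd2 1 1 f x * pd 1 f x * pd 1 f x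

/-- |D²f|², squared Frobenius norm of the Hessian. -/
def hessFrobSq (f : E2 → ℝ) (x : E2) : ℝ :=
  (pd2 0 0 f x) ^ 2 + (pd2 0 1 f x) ^ 2 + (pd2 1 0 f x) ^ 2 + (pd2 1 1 f x) ^ 2

/-- det D²f, determinant of the Hessian. -/
def detHess (f : E2 → ℝ) (x : E2) : ℝ :=
  pd2 0 0 f x * pd2 1 1 f x - pd2 0 1 f x * pd2 1 0 f x

/-- |D²f Df|². -/
def hessGradSq (f : E2 → ℝ) (x : E2) : ℝ :=
  (pd2 0 0 f x * pd 0 f x + pd2 0 1 f x * pd 1 f x) ^ 2 +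
  (pd2 1 0 f x * pd 0 f x + pd2 1 1 f x * pd 1 f x) ^ 2

/-- Jacobian determinant of the planar map with components `F 0`, `F 1`. -/
def jdet (F : Fin 2 → E2 → ℝ) (x : E2) : ℝ :=
  pd 0 (F 0) x * pd 1 (F 1) x - pd 1 (F 0) x * pd 0 (F 1) x

/-- Squared Frobenius norm of the Jacobian of the planar map with components `F 0`, `F 1`. -/
def jFrobSq (F : Fin 2 → E2 → ℝ) (x : E2) : ℝ :=
  (pd 0 (F 0) x) ^ 2 + (pd 1 (F 0) x) ^ 2 + (pd 0 (F 1) x) ^ 2 + (pd 1 (F 1) x) ^ 2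

/-- Df · Dg. -/
def gradDot (f g : E2 → ℝ) (x : E2) : ℝ :=
  pd 0 f x * pd 0 g x + pd 1 f x * pd 1 g x

/-- D²ψ Dv · Dv. -/
def hessQuad (ψ v : E2 → ℝ) (x : E2) : ℝ :=
  pd2 0 0 ψ x * pd 0 v x * pd 0 v x + pd2 0 1 ψ x * pd 0 v x * pd 1 v x +
  pd2 1 0 ψ x * pd 1 v x * pd 0 v x + pd2 1 1 ψ x * pd 1 v x * pd 1 v x

/-- (D²v Dv) · Dψ. -/
def hessGradDot (v ψ : E2 → ℝ) (x : E2) : ℝ :=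
  (pd2 0 0 v x * pd 0 v x + pd2 0 1 v x * pd 1 v x) * pd 0 ψ x +
  (pd2 1 0 v x * pd 0 v x + pd2 1 1 v x * pd 1 v x) * pd 1 ψ x

/-- Smooth compactly supported test function on Ω. -/
def IsTestOn (ψ : E2 → ℝ) (Ω : Set E2) : Prop :=
  ContDiff ℝ (⊤ : ℕ∞) ψ ∧ HasCompactSupport ψ ∧ tsupport ψ ⊆ Ω

/-- Components of W = |Dv|⁻¹ Dv. -/
def Wcomp (v : E2 → ℝ) (i : Fin 2) : E2 → ℝ := fun y => (gradNorm v y)⁻¹ * pd i v y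

/-! With `r = |Dv|`, `e = Dv / r` and `H = D²v`, the chain rule gives `∂ᵢWⱼ = Hᵢⱼ / r - eⱼ (He)ᵢ / r`
and `D log |Dv| = He / r`, so `|DW|² = (|H|² - |He|²) / r²`. In the plane, for symmetric `H` and
`e⊥` the rotated unit vector, `|H|² - |He|² = (He·e⊥)² + (He⊥·e⊥)²`, while the equation
`tr H + (p - 2) He·e = 0` says `He⊥·e⊥ = -(p - 1) He·e`. As `(p - 1)² - 1 = p (p - 2)`, this gives
`|DW|² r² = |He|² + p (p - 2) (He·e)²`. -/

section PartialDerivatives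

variable {f g : E2 → ℝ} {x : E2}

theorem HasFDerivAt.pd_eq {f' : E2 →L[ℝ] ℝ} (h : HasFDerivAt f f' x) (i : Fin 2) :
    pd i f x = f' (ee i) := by
  rw [pd, h.fderiv]

theorem pd_mul (hf : DifferentiableAt ℝ f x) (hg : DifferentiableAt ℝ g x) (i : Fin 2) :
    pd i (fun y => f y * g y) x = pd i f x * g x + f x * pd i g x := by
  have h : HasFDerivAt (fun y => f y * g y) (f x • fderiv ℝ g x + g x • fderiv ℝ f x) x :=
    hf.hasFDerivAt.mul hg.hasFDerivAt
  rw [h.pd_eq]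
  simp only [pd, add_apply, smul_apply, smul_eq_mul]
  ring

theorem pd_comp {φ : ℝ → ℝ} {φ' : ℝ} (hφ : HasDerivAt φ φ' (f x))
    (hf : DifferentiableAt ℝ f x) (i : Fin 2) :
    pd i (fun y => φ (f y)) x = φ' * pd i f x := by
  have h : HasFDerivAt (fun y => φ (f y)) (φ' • fderiv ℝ f x) x :=
    hφ.comp_hasFDerivAt x hf.hasFDerivAt
  rw [h.pd_eq]
  simp [pd]

end PartialDerivatives

def hessGrad (v : E2 → ℝ) (i : Fin 2) (x : E2) : ℝ :=
  pd2 i 0 v x * pd 0 v x + pd2 i 1 v x * pd 1 v x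

theorem hessGradSq_eq (v : E2 → ℝ) (x : E2) :
    hessGradSq v x = hessGrad v 0 x ^ 2 + hessGrad v 1 x ^ 2 :=
  rfl

section Gradient

variable {v : E2 → ℝ} {x : E2}

theorem ContDiffAt.differentiableAt_pd (hv : ContDiffAt ℝ 2 v x) (j : Fin 2) :
    DifferentiableAt ℝ (pd j v) x :=
  ((hv.fderiv_right (m := 1) le_rfl).clm_apply contDiffAt_const).differentiableAt one_ne_zero

theorem ContDiffAt.pd2_comm (hv : ContDiffAt ℝ 2 v x) (i j : Fin 2) :
    pd2 i j v x = pd2 j i v x := by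
  have hD : DifferentiableAt ℝ (fderiv ℝ v) x :=
    (hv.fderiv_right (m := 1) le_rfl).differentiableAt one_ne_zero
  have hpd2 : ∀ i j, pd2 i j v x = fderiv ℝ (fderiv ℝ v) x (ee i) (ee j) := fun i j => by
    show fderiv ℝ (fun y => fderiv ℝ v y (ee j)) x (ee i) = _
    rw [fderiv_clm_apply hD (differentiableAt_const _)]
    simp
  rw [hpd2, hpd2, hv.isSymmSndFDerivAt (by simp [minSmoothness_of_isRCLikeNormedField])]

theorem differentiableAt_gradSq (hd : ∀ j, DifferentiableAt ℝ (pd j v) x) :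
    DifferentiableAt ℝ (gradSq v) x :=
  ((hd 0).pow 2).add ((hd 1).pow 2)

theorem pd_gradSq (hd : ∀ j, DifferentiableAt ℝ (pd j v) x) (i : Fin 2) :
    pd i (gradSq v) x = 2 * hessGrad v i x := by
  have h : HasFDerivAt (gradSq v) _ x := ((hd 0).hasFDerivAt.pow 2).add ((hd 1).hasFDerivAt.pow 2)
  rw [h.pd_eq]
  simp only [pd, pd2, hessGrad, add_apply, smul_apply, smul_eq_mul, nsmul_eq_mul]
  ring

theorem gradNorm_pos (hg : gradSq v x ≠ 0) : 0 < gradNorm v x :=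
  Real.sqrt_pos.2 <| lt_of_le_of_ne (by unfold gradSq; positivity) hg.symm

theorem differentiableAt_gradNorm (hd : ∀ j, DifferentiableAt ℝ (pd j v) x) (hg : gradSq v x ≠ 0) :
    DifferentiableAt ℝ (gradNorm v) x :=
  ((hasDerivAt_sqrt hg).differentiableAt).comp x (differentiableAt_gradSq hd)

theorem pd_gradNorm (hd : ∀ j, DifferentiableAt ℝ (pd j v) x) (hg : gradSq v x ≠ 0)
    (i : Fin 2) : pd i (gradNorm v) x = hessGrad v i x / gradNorm v x := by
  have h : pd i (gradNorm v) x = 1 / (2 * gradNorm v x) * pd i (gradSq v) x :=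
    pd_comp (hasDerivAt_sqrt hg) (differentiableAt_gradSq hd) i
  have hr := (gradNorm_pos hg).ne'
  rw [h, pd_gradSq hd]
  field_simp

theorem pd_Wcomp (hd : ∀ j, DifferentiableAt ℝ (pd j v) x) (hg : gradSq v x ≠ 0)
    (i j : Fin 2) :
    pd i (Wcomp v j) x
      = pd2 i j v x / gradNorm v x - pd j v x * hessGrad v i x / gradNorm v x ^ 3 := by
  have hr := (gradNorm_pos hg).ne'
  have hinv := hasDerivAt_inv hr
  change pd i (fun y => (gradNorm v y)⁻¹ * pd j v y) x = _
  rw [pd_mul (f := fun y => (gradNorm v y)⁻¹) ((differentiableAt_gradNorm hd hg).inv hr) (hd j),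
    pd_comp hinv (differentiableAt_gradNorm hd hg), pd_gradNorm hd hg, pd2]
  field_simp
  ring

theorem pd_log_gradNorm (hd : ∀ j, DifferentiableAt ℝ (pd j v) x) (hg : gradSq v x ≠ 0)
    (i : Fin 2) :
    pd i (fun y => Real.log (gradNorm v y)) x = hessGrad v i x / gradSq v x := by
  have hr := (gradNorm_pos hg).ne'
  have hr2 : gradNorm v x ^ 2 = gradSq v x := Real.sq_sqrt (by unfold gradSq; positivity)
  rw [pd_comp (hasDerivAt_log hr) (differentiableAt_gradNorm hd hg), pd_gradNorm hd hg, ← hr2]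
  field_simp

end Gradient

section Algebra

variable {v : E2 → ℝ} {x : E2}

theorem jFrobSq_Wcomp (hd : ∀ j, DifferentiableAt ℝ (pd j v) x) (hg : gradSq v x ≠ 0) :
    jFrobSq (Wcomp v) x = (hessFrobSq v x - hessGradSq v x / gradSq v x) / gradSq v x := by
  have hr := (gradNorm_pos hg).ne'
  have hr2 : gradNorm v x ^ 2 = gradSq v x := Real.sq_sqrt (by unfold gradSq; positivity)
  have hsq : ∀ A B : ℝ, (A / gradNorm v x - B / gradNorm v x ^ 3) ^ 2
      = (A * gradSq v x - B) ^ 2 / gradSq v x ^ 3 := by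
    intro A B
    rw [← hr2]
    field_simp
  simp only [jFrobSq, pd_Wcomp hd hg, hsq]
  rw [hessGradSq_eq]
  unfold hessFrobSq hessGrad
  unfold gradSq at hg ⊢
  field_simp
  ring

theorem hessFrobSq_mul_gradSq_sq {p : ℝ} (hsym : pd2 0 1 v x = pd2 1 0 v x)
    (hpl : gradSq v x * lap v x + (p - 2) * infLap v x = 0) :
    hessFrobSq v x * gradSq v x ^ 2
      = 2 * gradSq v x * hessGradSq v x + p * (p - 2) * infLap v x ^ 2 := by
  -- `hpl` reads `r² (He⊥·e⊥ + (p - 1) He·e) = 0`; the coefficient is `r² (He⊥·e⊥ - (p - 1) He·e)`.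
  linear_combination (norm := skip) (gradSq v x * lap v x - p * infLap v x) * hpl
  unfold hessFrobSq gradSq hessGradSq lap infLap
  rw [hsym]
  ring

end Algebra

theorem stmt_9_general (Ω : Set E2) (hΩ : IsOpen Ω) (v : E2 → ℝ)
    (hv : ContDiffOn ℝ (⊤ : ℕ∞) v Ω) (p : ℝ)
    (x : E2) (hx : x ∈ Ω) (hgrad : gradSq v x ≠ 0)
    (hpl : gradSq v x * lap v x + (p - 2) * infLap v x = 0) :
    jFrobSq (Wcomp v) x
      = hessGradSq v x / (gradSq v x) ^ 2
        + p * (p - 2) * (infLap v x) ^ 2 / (gradSq v x) ^ 3 ∧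
    (pd 0 (fun y => Real.log (gradNorm v y)) x) ^ 2
        + (pd 1 (fun y => Real.log (gradNorm v y)) x) ^ 2
      = hessGradSq v x / (gradSq v x) ^ 2 := by
  have hv2 : ContDiffAt ℝ 2 v x := (hv.contDiffAt (hΩ.mem_nhds hx)).of_le (by norm_cast)
  have hd := hv2.differentiableAt_pd
  have hfrob := hessFrobSq_mul_gradSq_sq (hv2.pd2_comm 0 1) hpl
  constructor
  · rw [jFrobSq_Wcomp hd hgrad]
    field_simp
    linear_combination hfrob
  · rw [pd_log_gradNorm hd hgrad, pd_log_gradNorm hd hgrad, div_pow, div_pow, ← add_div,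
      hessGradSq_eq]

/-- identity for |DW|² where W = |Dv|⁻¹Dv, at a point where the
p-Laplace equation holds in nondivergence form and Dv ≠ 0. -/
theorem stmt_9 (Ω : Set E2) (hΩ : IsOpen Ω) (v : E2 → ℝ)
    (hv : ContDiffOn ℝ (⊤ : ℕ∞) v Ω) (p : ℝ) (hp : 1 < p)
    (x : E2) (hx : x ∈ Ω) (hgrad : gradSq v x ≠ 0)
    (hpl : gradSq v x * lap v x + (p - 2) * infLap v x = 0) :
    jFrobSq (Wcomp v) x
      = hessGradSq v x / (gradSq v x) ^ 2
        + p * (p - 2) * (infLap v x) ^ 2 / (gradSq v x) ^ 3 ∧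
    (pd 0 (fun y => Real.log (gradNorm v y)) x) ^ 2
        + (pd 1 (fun y => Real.log (gradNorm v y)) x) ^ 2
      = hessGradSq v x / (gradSq v x) ^ 2 :=
  stmt_9_general Ω hΩ v hv p x hx hgrad hpl
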